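/- Let H be a complex Hilbert space and A : H →L[ℂ] H a bounded self-adjoint operator with 0 ≤ re⟪A u, u⟫ for all u ∈ H, let S t := cfc (fun x : ℝ => if x = 0 then t else Real.sin (t * Real.sqrt x) / Real.sqrt x) A, and let f : ℝ → H be continuous with compact support. Define (G f)(t) := ∫_{s ∈ ℝ} (S (t − s)) (f s) ds. Then G f is twice continuously differentiable with (G f)″(t) = −A ((G f) t) for all t ∈ ℝ, and G f = u − v, where u(t) = ∫_{s ∈ Iic t} (S (t − s)) (f s) ds is the retarded solution and v(t) = −∫_{s ∈ Ici t} (S (t − s)) (f s) ds is the advanced solution of the inhomogeneous equation w″ + A w = f. -/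

import Mathlib

/-! The operators `waveSin a t = a^{-1/2} sin (t a^{1/2})` and `waveCos a t = cos (t a^{1/2})`
are images of scalar functions under the continuous functional calculus. For each point `x` of the
(bounded) spectrum, the scalar symbols have `t`-derivatives `cos (t √x)` and `-√x sin (t √x)`,
which are Lipschitz in `t` uniformly in `x`; hence the Taylor remainders are `O((t' - t)²)`
uniformly on the spectrum, and since the functional calculus is isometric, `waveSin a` and
`waveCos a` are differentiable in operator norm with `waveSin' = waveCos` and
`waveCos' = -a * waveSin`. As the source has compact support, the integral defining `G` may be
differentiated twice under the integral sign, giving `G'' = -A G`; and `G = u - v` is the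
splitting of `ℝ` at `t`, the point `{t}` being null. -/

open scoped InnerProductSpace
open MeasureTheory

section Calculus

open Metric Set
open scoped NNReal Pointwise

theorem norm_sub_sub_smul_le_of_lipschitzWith {E : Type*} [NormedAddCommGroup E]
    [NormedSpace ℝ E] {f f' : ℝ → E} {L : ℝ≥0} (hf : ∀ r, HasDerivAt f (f' r) r)
    (hf' : LipschitzWith L f') (s t : ℝ) : ‖f t - f s - (t - s) • f' s‖ ≤ L * (t - s) ^ 2 := by
  have hderiv : ∀ r ∈ uIcc s t,
      HasDerivWithinAt (fun r => f r - r • f' s) (f' r - f' s) (uIcc s t) r := fun r _ => by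
    simpa using ((hf r).fun_sub ((hasDerivAt_id' r).smul_const (f' s))).hasDerivWithinAt
  have hbound : ∀ r ∈ uIcc s t, ‖f' r - f' s‖ ≤ L * |t - s| := fun r hr => by
    rw [← dist_eq_norm]
    exact (hf'.dist_le_mul r s).trans (by gcongr; exact abs_sub_left_of_mem_uIcc hr)
  calc ‖f t - f s - (t - s) • f' s‖ = ‖(f t - t • f' s) - (f s - s • f' s)‖ := by
        rw [sub_smul]; congr 1; abel
    _ ≤ L * |t - s| * ‖t - s‖ := (convex_uIcc s t).norm_image_sub_le_of_norm_hasDerivWithin_le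
        hderiv hbound left_mem_uIcc right_mem_uIcc
    _ = L * (t - s) ^ 2 := by rw [Real.norm_eq_abs, mul_assoc, abs_mul_abs_self, sq]

theorem contDiff_two_of_hasDerivAt {E : Type*} [NormedAddCommGroup E] [NormedSpace ℝ E]
    {f f' f'' : ℝ → E} (hf : ∀ t, HasDerivAt f (f' t) t) (hf' : ∀ t, HasDerivAt f' (f'' t) t)
    (hf'' : Continuous f'') : ContDiff ℝ 2 f := by
  have hderiv : deriv f = f' := funext fun t => (hf t).deriv
  have hderiv' : deriv f' = f'' := funext fun t => (hf' t).deriv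
  rw [show (2 : WithTop ℕ∞) = 1 + 1 from rfl, contDiff_succ_iff_deriv, hderiv,
    contDiff_one_iff_deriv, hderiv']
  exact ⟨fun t => (hf t).differentiableAt, by simp, fun t => (hf' t).differentiableAt, hf''⟩

variable {𝕜 E F : Type*} [RCLike 𝕜] [NormedAddCommGroup E] [NormedSpace 𝕜 E]
  [NormedAddCommGroup F] [NormedSpace 𝕜 F]

theorem integrable_apply_sub {K : ℝ → E →L[𝕜] F} (hK : Continuous K) {f : ℝ → E}
    (hf : Continuous f) (hfc : HasCompactSupport f) (t : ℝ) :
    Integrable fun s => K (t - s) (f s) :=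
  ((hK.comp (continuous_const.sub continuous_id)).clm_apply hf).integrable_of_hasCompactSupport
    (hfc.mono fun s hs h0 => hs (by simp [h0]))

theorem hasDerivAt_integral_apply_sub [NormedSpace ℝ F] [CompleteSpace F] {K K' : ℝ → E →L[𝕜] F}
    (hK : ∀ t, HasDerivAt K (K' t) t) (hK' : Continuous K') {f : ℝ → E} (hf : Continuous f)
    (hfc : HasCompactSupport f) (t₀ : ℝ) :
    HasDerivAt (fun t => ∫ s, K (t - s) (f s)) (∫ s, K' (t₀ - s) (f s)) t₀ := by
  have hKc : Continuous K := Differentiable.continuous fun t => (hK t).differentiableAt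
  have hcpt : IsCompact (closedBall t₀ 1 + -tsupport f) :=
    (isCompact_closedBall t₀ 1).add hfc.isCompact.neg
  obtain ⟨M, hM⟩ := hcpt.exists_bound_of_continuousOn hK'.continuousOn
  have hbound : ∀ s, ∀ t ∈ ball t₀ 1, ‖K' (t - s) (f s)‖ ≤ M * ‖f s‖ := by
    intro s t ht
    by_cases hs : f s = 0
    · simp [hs]
    have hKM : ‖K' (t - s)‖ ≤ M := sub_eq_add_neg t s ▸
      hM _ (add_mem_add (ball_subset_closedBall ht) (neg_mem_neg.2 (subset_tsupport f hs)))
    exact (K' _).le_opNorm _ |>.trans (mul_le_mul_of_nonneg_right hKM (norm_nonneg _))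
  have hderiv : ∀ s, ∀ t ∈ ball t₀ 1,
      HasDerivAt (fun t => K (t - s) (f s)) (K' (t - s) (f s)) t := fun s t _ =>
    ((ContinuousLinearMap.apply 𝕜 F (f s)).restrictScalars ℝ).hasFDerivAt.comp_hasDerivAt t
      ((hK (t - s)).comp_sub_const t s)
  exact (hasDerivAt_integral_of_dominated_loc_of_deriv_le (μ := volume) (ball_mem_nhds t₀ one_pos)
    (.of_forall fun t => (integrable_apply_sub hKc hf hfc t).aestronglyMeasurable)
    (integrable_apply_sub hKc hf hfc t₀)
    (integrable_apply_sub hK' hf hfc t₀).aestronglyMeasurable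
    (.of_forall hbound) ((hf.norm.const_mul M).integrable_of_hasCompactSupport hfc.norm.mul_left)
    (.of_forall hderiv)).2

end Calculus

section FunctionalCalculus

open Asymptotics Real
open scoped NNReal

variable {𝒜 : Type*} [NormedRing 𝒜] [StarRing 𝒜] [NormedAlgebra ℝ 𝒜]
  [IsometricContinuousFunctionalCalculus ℝ 𝒜 IsSelfAdjoint]

theorem hasDerivAt_cfc_of_lipschitzWith {a : 𝒜} {φ ψ : ℝ → ℝ → ℝ} {L : ℝ≥0}
    (hφ : ∀ t, ContinuousOn (φ t) (spectrum ℝ a)) (hψ : ∀ t, ContinuousOn (ψ t) (spectrum ℝ a))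
    (hderiv : ∀ x ∈ spectrum ℝ a, ∀ r, HasDerivAt (φ · x) (ψ r x) r)
    (hlip : ∀ x ∈ spectrum ℝ a, LipschitzWith L (ψ · x)) (t : ℝ) :
    HasDerivAt (fun t => cfc (φ t) a) (cfc (ψ t) a) t := by
  rw [hasDerivAt_iff_isLittleO]
  refine (IsBigO.of_bound L ?_).trans_isLittleO (isLittleO_pow_sub_sub t one_lt_two)
  filter_upwards with t'
  have hcfc : cfc (φ t') a - cfc (φ t) a - (t' - t) • cfc (ψ t) a
      = cfc (fun x => φ t' x - φ t x - (t' - t) * ψ t x) a := by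
    rw [cfc_sub (fun x => φ t' x - φ t x) (fun x => (t' - t) * ψ t x) a ((hφ t').sub (hφ t))
      (continuousOn_const.mul (hψ t)), cfc_sub (φ t') (φ t) a, cfc_const_mul _ _ a (hψ t)]
  rw [hcfc, norm_pow, norm_norm, Real.norm_eq_abs, sq_abs]
  exact norm_cfc_le (by positivity) fun x hx =>
    norm_sub_sub_smul_le_of_lipschitzWith (hderiv x hx) (hlip x hx) t t'

theorem mul_sinc (x : ℝ) : x * sinc x = sin x := by
  rcases eq_or_ne x 0 with rfl | hx
  · simp
  · rw [sinc_of_ne_zero hx, mul_div_cancel₀ _ hx]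

theorem hasDerivAt_mul_sinc_mul (y t : ℝ) :
    HasDerivAt (fun r => r * sinc (r * y)) (cos (t * y)) t := by
  rcases eq_or_ne y 0 with rfl | hy
  · simpa using hasDerivAt_id' t
  have hsin : (fun r => r * sinc (r * y)) = fun r => sin (r * y) / y := funext fun r => by
    rw [← mul_sinc, mul_right_comm, mul_div_cancel_right₀ _ hy]
  rw [hsin]
  simpa [hy] using ((hasDerivAt_mul_const y).sin).div_const y

theorem lipschitzWith_cos_mul (y : ℝ) : LipschitzWith ‖y‖₊ fun r => cos (r * y) := by
  simpa [mul_comm, Function.comp_def] using lipschitzWith_cos.comp (lipschitzWith_smul y)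

theorem lipschitzWith_neg_sin_mul_mul (y : ℝ) :
    LipschitzWith (‖y‖₊ * ‖y‖₊) fun r => -sin (r * y) * y := by
  simpa [mul_comm, Function.comp_def] using
    (lipschitzWith_smul (-y)).comp (lipschitzWith_sin.comp (lipschitzWith_smul y))

/-- `waveSin a t = a ^ (-1/2) * sin (t * a ^ (1/2))`, written with `sinc` so that it is defined
also where `a` is not invertible. -/
noncomputable def waveSin (a : 𝒜) (t : ℝ) : 𝒜 := cfc (fun x => t * sinc (t * √x)) a

noncomputable def waveCos (a : 𝒜) (t : ℝ) : 𝒜 := cfc (fun x => cos (t * √x)) a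

theorem hasDerivAt_waveSin {a : 𝒜} (ha : IsSelfAdjoint a) (t : ℝ) :
    HasDerivAt (waveSin a) (waveCos a t) t := by
  refine hasDerivAt_cfc_of_lipschitzWith (L := NNReal.sqrt ‖a‖₊) (fun _ => by fun_prop)
    (fun _ => by fun_prop) (fun x _ => hasDerivAt_mul_sinc_mul √x) (fun x hx => ?_) t
  refine (lipschitzWith_cos_mul √x).weaken ?_
  rw [← NNReal.coe_le_coe, coe_nnnorm, Real.coe_sqrt, coe_nnnorm,
    Real.norm_of_nonneg (sqrt_nonneg x)]
  exact sqrt_le_sqrt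
    ((le_abs_self x).trans (IsometricContinuousFunctionalCalculus.norm_spectrum_le a hx))

variable [PartialOrder 𝒜] [NonnegSpectrumClass ℝ 𝒜]

theorem waveSin_eq_cfc {a : 𝒜} (ha : 0 ≤ a) (t : ℝ) :
    waveSin a t = cfc (fun x => if x = 0 then t else sin (t * √x) / √x) a := by
  refine cfc_congr fun x hx => ?_
  split_ifs with hx0
  · simp [hx0]
  · have hsqrt : √x ≠ 0 := sqrt_ne_zero'.2 ((spectrum_nonneg_of_nonneg ha hx).lt_of_ne' hx0)
    rw [eq_div_iff hsqrt, ← mul_sinc]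
    ring

theorem hasDerivAt_waveCos [StarOrderedRing 𝒜] {a : 𝒜} (ha : 0 ≤ a) (t : ℝ) :
    HasDerivAt (waveCos a) (-(a * waveSin a t)) t := by
  have hψ : cfc (fun x => -sin (t * √x) * √x) a = -(a * waveSin a t) := by
    calc cfc (fun x => -sin (t * √x) * √x) a = cfc (fun x => -(x * (t * sinc (t * √x)))) a :=
          cfc_congr fun x hx => by
            linear_combination √x * mul_sinc (t * √x)
              - t * sinc (t * √x) * mul_self_sqrt (spectrum_nonneg_of_nonneg ha hx)
      _ = -(a * waveSin a t) := by
        rw [cfc_neg, cfc_mul (fun x => x) _ a, cfc_id' ℝ a, waveSin]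
  rw [← hψ]
  refine hasDerivAt_cfc_of_lipschitzWith (L := ‖a‖₊) (fun _ => by fun_prop)
    (fun _ => by fun_prop) (fun x _ r => (hasDerivAt_mul_const √x).cos) (fun x hx => ?_) t
  refine (lipschitzWith_neg_sin_mul_mul √x).weaken ?_
  rw [← NNReal.coe_le_coe, NNReal.coe_mul, coe_nnnorm, coe_nnnorm,
    Real.norm_of_nonneg (sqrt_nonneg x), mul_self_sqrt (spectrum_nonneg_of_nonneg ha hx)]
  exact (le_abs_self x).trans (IsometricContinuousFunctionalCalculus.norm_spectrum_le a hx)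

end FunctionalCalculus

/-- The causal propagator `G = G⁺ − G⁻` for the abstract wave equation: for a positive
bounded self-adjoint operator `A` and a continuous compactly supported source `f`,
`(G f)(t) = ∫_ℝ S(t−s) f(s) ds` is a `C²` solution of the homogeneous equation
`w″ = −A w`, and it equals the difference of the retarded and advanced solutions. -/
theorem abstract_causal_propagator {H : Type*} [NormedAddCommGroup H]
    [InnerProductSpace ℂ H] [CompleteSpace H]
    (A : H →L[ℂ] H) (hA : IsSelfAdjoint A) (hpos : ∀ w : H, 0 ≤ (⟪A w, w⟫_ℂ).re)
    (S : ℝ → H →L[ℂ] H)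
    (hS : ∀ t : ℝ, S t = cfc (fun x : ℝ =>
      if x = 0 then t else Real.sin (t * Real.sqrt x) / Real.sqrt x) A)
    (f : ℝ → H) (hf : Continuous f) (hfc : HasCompactSupport f)
    (G u v : ℝ → H)
    (hG : ∀ t : ℝ, G t = ∫ s : ℝ, (S (t - s)) (f s))
    (hu : ∀ t : ℝ, u t = ∫ s in Set.Iic t, (S (t - s)) (f s))
    (hv : ∀ t : ℝ, v t = -∫ s in Set.Ici t, (S (t - s)) (f s)) :
    ContDiff ℝ 2 G ∧ (∀ t : ℝ, deriv (deriv G) t = -(A (G t))) ∧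
      (∀ t : ℝ, G t = u t - v t) := by
  have hA₀ : 0 ≤ A := (ContinuousLinearMap.nonneg_iff_isPositive A).2
    (ContinuousLinearMap.isPositive_def'.2 ⟨hA, hpos⟩)
  obtain rfl : S = waveSin A := funext fun t => (hS t).trans (waveSin_eq_cfc hA₀ t).symm
  have hSc : Continuous (waveSin A) :=
    Differentiable.continuous fun t => (hasDerivAt_waveSin hA t).differentiableAt
  have hCc : Continuous (waveCos A) :=
    Differentiable.continuous fun t => (hasDerivAt_waveCos hA₀ t).differentiableAt
  have hG' : ∀ t, HasDerivAt G (∫ s, waveCos A (t - s) (f s)) t :=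
    funext hG ▸ hasDerivAt_integral_apply_sub (hasDerivAt_waveSin hA) hCc hf hfc
  have hG'' : ∀ t, HasDerivAt (fun t => ∫ s, waveCos A (t - s) (f s)) (-(A (G t))) t := fun t => by
    convert hasDerivAt_integral_apply_sub (hasDerivAt_waveCos hA₀) (continuous_const.mul hSc).neg
      hf hfc t using 1
    simp [hG, integral_neg, A.integral_comp_comm (integrable_apply_sub hSc hf hfc t)]
  have hGc : Continuous G := Differentiable.continuous fun t => (hG' t).differentiableAt
  refine ⟨contDiff_two_of_hasDerivAt hG' hG'' (A.continuous.comp hGc).neg, fun t => ?_, fun t => ?_⟩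
  · rw [funext fun t => (hG' t).deriv, (hG'' t).deriv]
  · have hint := integrable_apply_sub hSc hf hfc t
    rw [hG, hu, hv, sub_neg_eq_add, integral_Ici_eq_integral_Ioi]
    exact (intervalIntegral.integral_Iic_add_Ioi hint.integrableOn hint.integrableOn).symm
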